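/- Let K ≥ 1, set 𝒦 = {−K,…,K} and m = 2K+1. Let {(x_i,v_i)}_{i=1}^m be m distinct particles in Ω and {(g_j,w_j)}_{j=1}^m be m pairwise distinct points of Ω. Suppose that for every k ∈ 𝒦 the positions x_i + kτv_i (i = 1,…,m) are pairwise distinct, and for every k ∈ 𝒦 and every i ∈ {1,…,m} there exists exactly one index j ∈ {1,…,m} with g_j − x_i + kτ(w_j − v_i) = 0. Then the signed measure h = Σ_{i=1}^m δ_{(x_i,v_i)} − Σ_{j=1}^m δ_{(g_j,w_j)} lies in the kernel of the measurement operator: (𝒢h)_{l,k} = 0 for every l ∈ ℤ^d with ‖l‖_∞ ≤ f_c and every k ∈ {−K,…,K}. -/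

import Mathlib

open MeasureTheory Complex Real Set

noncomputable section

/-- Phase space: positions and velocities in `ℝ^d`. -/
abbrev PS (d : ℕ) := (Fin d → ℝ) × (Fin d → ℝ)

/-- The phase-space domain `Ω`. -/
def Omega (d K : ℕ) (τ : ℝ) : Set (PS d) :=
  {p | ∀ k : ℤ, |k| ≤ (K : ℤ) → ∀ j, p.1 j + (k : ℝ) * τ * p.2 j ∈ Set.Icc (0 : ℝ) 1}

/-- The affine set `L_{i,k}` attached to a particle `p₀` and a time sample `k`. -/
def Lset (d K : ℕ) (τ : ℝ) (p₀ : PS d) (k : ℤ) : Set (PS d) :=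
  {p ∈ Omega d K τ | ∀ j, (p.1 j - p₀.1 j) + (k : ℝ) * τ * (p.2 j - p₀.2 j) = 0}

/-- `g` is a ghost particle of the configuration `P` with respect to the
set of time samples `Ks`. -/
def IsGhost {d K N : ℕ} (τ : ℝ) (P : Fin N → PS d) (Ks : Finset ℤ) (g : PS d) : Prop :=
  g ∈ Omega d K τ ∧ ∃ ι : ℤ → Fin N, Set.InjOn ι (Ks : Set ℤ) ∧
    (⋂ k ∈ Ks, Lset d K τ (P (ι k)) k) = {g}

/-- Integral of a complex function against a complex measure, via the Jordan
decompositions of the real and imaginary parts. -/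
def cintegral {α : Type*} [MeasurableSpace α] (μ : ComplexMeasure α) (f : α → ℂ) : ℂ :=
  ((∫ x, f x ∂(ComplexMeasure.re μ).toJordanDecomposition.posPart)
      - ∫ x, f x ∂(ComplexMeasure.re μ).toJordanDecomposition.negPart)
    + Complex.I * ((∫ x, f x ∂(ComplexMeasure.im μ).toJordanDecomposition.posPart)
      - ∫ x, f x ∂(ComplexMeasure.im μ).toJordanDecomposition.negPart)

/-- The total variation norm of a complex measure, defined by duality against
continuous functions bounded by one. -/
def tvNorm {α : Type*} [MeasurableSpace α] [TopologicalSpace α] (μ : ComplexMeasure α) : ℝ :=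
  sSup {r | ∃ f : α → ℂ, Continuous f ∧ (∀ x, ‖f x‖ ≤ 1) ∧ r = ‖cintegral μ f‖}

/-- A complex measure is supported on a set `S` if it vanishes on measurable sets
disjoint from `S`. -/
def SupportedOn {α : Type*} [MeasurableSpace α] (μ : ComplexMeasure α) (S : Set α) : Prop :=
  ∀ t : Set α, MeasurableSet t → Disjoint t S → μ t = 0

/-- The Dirac measure at a point, as a complex measure. -/
def cdirac {α : Type*} [MeasurableSpace α] (a : α) : ComplexMeasure α :=
  (MeasureTheory.Measure.dirac a).toSignedMeasure.toComplexMeasure 0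

/-- The test function `p ↦ e^{-2πi l·(x + kτv)}`. -/
def testFn (d : ℕ) (τ : ℝ) (l : Fin d → ℤ) (k : ℤ) : PS d → ℂ :=
  fun p => Complex.exp (-(2 * (π : ℂ) * Complex.I) *
    ∑ j, (l j : ℂ) * ((p.1 j : ℂ) + (k : ℂ) * (τ : ℂ) * (p.2 j : ℂ)))

/-- The measurement `(𝒢 μ)_{l,k}`. -/
def Gmeas {d : ℕ} (τ : ℝ) (μ : ComplexMeasure (PS d)) (l : Fin d → ℤ) (k : ℤ) : ℂ :=
  cintegral μ (testFn d τ l k)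

/-- Two complex measures give the same measurements for all allowed frequencies
`‖l‖_∞ ≤ f_c` and time samples `|k| ≤ K`. -/
def SameMeas {d : ℕ} (K : ℕ) (τ : ℝ) (f_c : ℕ) (μ ν : ComplexMeasure (PS d)) : Prop :=
  ∀ l : Fin d → ℤ, (∀ j, |l j| ≤ (f_c : ℤ)) → ∀ k : ℤ, |k| ≤ (K : ℤ) →
    Gmeas τ μ l k = Gmeas τ ν l k

/-- The set of allowed frequencies `l ∈ ℤ^d`, `‖l‖_∞ ≤ f_c`. -/
def freqSet (d : ℕ) (f_c : ℕ) : Finset (Fin d → ℤ) :=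
  Fintype.piFinset fun _ => Finset.Icc (-(f_c : ℤ)) (f_c : ℤ)

/-- A function on phase space has dynamical form. -/
def DynamicalForm (d K : ℕ) (τ : ℝ) (f_c : ℕ) (q : PS d → ℂ) : Prop :=
  ∃ c : ℤ → (Fin d → ℤ) → ℂ, ∀ p : PS d,
    q p = ∑ k ∈ Finset.Icc (-(K : ℤ)) (K : ℤ), ∑ l ∈ freqSet d f_c,
      c k l * Complex.exp ((2 * (π : ℂ) * Complex.I) *
        ∑ j, (l j : ℂ) * ((p.1 j : ℂ) + (k : ℂ) * (τ : ℂ) * (p.2 j : ℂ)))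

/-- The canonical embedding of `𝕂` (either `ℝ` or `ℂ`) into `ℂ`. -/
def toC {𝕜 : Type*} [RCLike 𝕜] (a : 𝕜) : ℂ :=
  (RCLike.re a : ℝ) + (RCLike.im a : ℝ) * Complex.I


/-! At time sample `k` the test function `e^{-2πi l·(x + kτv)}` depends on a particle only
through its position `x + kτv`. Sending each particle `i` to the ghost `σ i` that occupies its
position at time `k` gives a map `σ` which is injective because the particles' positions at time
`k` are distinct, hence a bijection of the `2K + 1` indices; so the Dirac masses of particles and
ghosts integrate the test function to the same sum. -/

namespace MeasureTheory

variable {α : Type*} [MeasurableSpace α]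

theorem Measure.toSignedMeasure_finsetSum {ι : Type*} (s : Finset ι) (μ : ι → Measure α)
    [∀ i, IsFiniteMeasure (μ i)] :
    (∑ i ∈ s, μ i).toSignedMeasure = ∑ i ∈ s, (μ i).toSignedMeasure := by
  classical
  induction s using Finset.induction with
  | empty => simp [Measure.toSignedMeasure_zero]
  | insert a s has ih =>
    calc (∑ i ∈ insert a s, μ i).toSignedMeasure
        = (μ a + ∑ i ∈ s, μ i).toSignedMeasure :=
          Measure.toSignedMeasure_congr (Finset.sum_insert has)
      _ = ∑ i ∈ insert a s, (μ i).toSignedMeasure := by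
          rw [Measure.toSignedMeasure_add, ih, Finset.sum_insert has]

variable {E : Type*} [NormedAddCommGroup E] [NormedSpace ℝ E]

/-- `s = s⁺ - s⁻ = μ₁ - μ₂` means `s⁺ + μ₂ = s⁻ + μ₁` as measures, and bounded functions
integrate additively against sums of finite measures. -/
theorem SignedMeasure.integral_posPart_sub_integral_negPart {s : SignedMeasure α}
    {μ₁ μ₂ : Measure α} [IsFiniteMeasure μ₁] [IsFiniteMeasure μ₂]
    (hs : s = μ₁.toSignedMeasure - μ₂.toSignedMeasure)
    {f : α → E} (hf : StronglyMeasurable f) {C : ℝ} (hfC : ∀ x, ‖f x‖ ≤ C) :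
    ∫ x, f x ∂s.toJordanDecomposition.posPart - ∫ x, f x ∂s.toJordanDecomposition.negPart
      = ∫ x, f x ∂μ₁ - ∫ x, f x ∂μ₂ := by
  set j := s.toJordanDecomposition
  have hj : j.posPart + μ₂ = j.negPart + μ₁ := by
    have hjs := s.toSignedMeasure_toJordanDecomposition.trans hs
    rw [JordanDecomposition.toSignedMeasure, sub_eq_sub_iff_add_eq_add] at hjs
    rw [← Measure.toSignedMeasure_eq_toSignedMeasure_iff, Measure.toSignedMeasure_add,
      Measure.toSignedMeasure_add, add_comm j.negPart.toSignedMeasure]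
    exact hjs
  have hint : ∀ (ν : Measure α) [IsFiniteMeasure ν], Integrable f ν := fun ν _ =>
    .of_bound hf.aestronglyMeasurable C (.of_forall hfC)
  have h := congrArg (fun ν => ∫ x, f x ∂ν) hj
  simp only [integral_add_measure (hint _) (hint _)] at h
  rw [sub_eq_sub_iff_add_eq_add, add_comm (∫ x, f x ∂μ₁)]
  exact h

end MeasureTheory

theorem cintegral_eq_integral_sub_integral {α : Type*} [MeasurableSpace α]
    {c : ComplexMeasure α} {μ₁ μ₂ : Measure α} [IsFiniteMeasure μ₁] [IsFiniteMeasure μ₂]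
    (hre : ComplexMeasure.re c = μ₁.toSignedMeasure - μ₂.toSignedMeasure)
    (him : ComplexMeasure.im c = 0)
    {f : α → ℂ} (hf : StronglyMeasurable f) {C : ℝ} (hfC : ∀ x, ‖f x‖ ≤ C) :
    cintegral c f = ∫ x, f x ∂μ₁ - ∫ x, f x ∂μ₂ := by
  rw [cintegral, him, SignedMeasure.toJordanDecomposition_zero,
    JordanDecomposition.zero_posPart, JordanDecomposition.zero_negPart,
    SignedMeasure.integral_posPart_sub_integral_negPart hre hf hfC]
  simp

theorem cintegral_sum_cdirac_sub_sum_cdirac {α ι κ : Type*} [MeasurableSpace α]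
    [Fintype ι] [Fintype κ] (P : ι → α) (G : κ → α)
    {f : α → ℂ} (hf : StronglyMeasurable f) {C : ℝ} (hfC : ∀ x, ‖f x‖ ≤ C) :
    cintegral ((∑ i, cdirac (P i)) - ∑ j, cdirac (G j)) f = ∑ i, f (P i) - ∑ j, f (G j) := by
  have hre : ComplexMeasure.re ((∑ i, cdirac (P i)) - ∑ j, cdirac (G j))
      = (∑ i, Measure.dirac (P i)).toSignedMeasure
        - (∑ j, Measure.dirac (G j)).toSignedMeasure := by
    rw [map_sub, map_sum, map_sum, Measure.toSignedMeasure_finsetSum,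
      Measure.toSignedMeasure_finsetSum]
    rfl
  have him : ComplexMeasure.im ((∑ i, cdirac (P i)) - ∑ j, cdirac (G j)) = 0 := by
    simp only [map_sub, map_sum, cdirac, SignedMeasure.im_toComplexMeasure,
      Finset.sum_const_zero, sub_self]
  have hint : ∀ a : α, Integrable f (Measure.dirac a) := fun _ =>
    .of_bound hf.aestronglyMeasurable C (.of_forall hfC)
  rw [cintegral_eq_integral_sub_integral hre him hf hfC,
    integral_finsetSum_measure fun _ _ => hint _, integral_finsetSum_measure fun _ _ => hint _]
  simp only [integral_dirac' _ _ hf]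

def posAt {d : ℕ} (τ : ℝ) (k : ℤ) (p : PS d) : Fin d → ℝ :=
  fun j => p.1 j + (k : ℝ) * τ * p.2 j

theorem posAt_eq_posAt_iff {d : ℕ} (τ : ℝ) (k : ℤ) (p q : PS d) :
    posAt τ k q = posAt τ k p ↔ ∀ j, q.1 j - p.1 j + (k : ℝ) * τ * (q.2 j - p.2 j) = 0 := by
  simp only [funext_iff, posAt]
  exact forall_congr' fun j => by constructor <;> intro h <;> linarith

theorem testFn_eq_exp_posAt {d : ℕ} (τ : ℝ) (l : Fin d → ℤ) (k : ℤ) (p : PS d) :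
    testFn d τ l k p
      = Complex.exp (-(2 * π * Complex.I) * ↑(∑ j, (l j : ℝ) * posAt τ k p j)) := by
  simp only [testFn, posAt]
  push_cast
  rfl

theorem norm_testFn {d : ℕ} (τ : ℝ) (l : Fin d → ℤ) (k : ℤ) (p : PS d) :
    ‖testFn d τ l k p‖ = 1 := by
  rw [testFn_eq_exp_posAt, Complex.norm_exp]
  simp

theorem continuous_testFn {d : ℕ} (τ : ℝ) (l : Fin d → ℤ) (k : ℤ) :
    Continuous (testFn d τ l k) := by
  unfold testFn
  fun_prop

theorem testFn_congr_posAt {d : ℕ} {τ : ℝ} (l : Fin d → ℤ) {k : ℤ} {p q : PS d}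
    (h : posAt τ k p = posAt τ k q) : testFn d τ l k p = testFn d τ l k q := by
  simp only [testFn_eq_exp_posAt, h]

theorem ghost_difference_in_kernel_general
    {d K : ℕ} (τ : ℝ) (f_c : ℕ)
    (P G : Fin (2 * K + 1) → PS d)
    (hpos : ∀ k ∈ Finset.Icc (-(K : ℤ)) (K : ℤ), ∀ i i' : Fin (2 * K + 1), i ≠ i' →
      (fun j => (P i).1 j + (k : ℝ) * τ * (P i).2 j) ≠
        (fun j => (P i').1 j + (k : ℝ) * τ * (P i').2 j))
    (huniq : ∀ k ∈ Finset.Icc (-(K : ℤ)) (K : ℤ), ∀ i : Fin (2 * K + 1),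
      ∃! j' : Fin (2 * K + 1), ∀ j,
        (G j').1 j - (P i).1 j + (k : ℝ) * τ * ((G j').2 j - (P i).2 j) = 0) :
    ∀ l : Fin d → ℤ, (∀ j, |l j| ≤ (f_c : ℤ)) → ∀ k : ℤ, |k| ≤ (K : ℤ) →
      Gmeas τ ((∑ i, cdirac (P i)) - (∑ j, cdirac (G j))) l k = 0 := by
  intro l _ k hk
  have hkK : k ∈ Finset.Icc (-(K : ℤ)) (K : ℤ) := Finset.mem_Icc.mpr (abs_le.mp hk)
  choose σ hσ using fun i => (huniq k hkK i).exists
  simp only [← posAt_eq_posAt_iff] at hσ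
  have hσ_inj : Function.Injective σ := fun i i' hii' => by
    by_contra hne
    exact hpos k hkK i i' hne ((hσ i).symm.trans (hii' ▸ hσ i'))
  rw [Gmeas, cintegral_sum_cdirac_sub_sum_cdirac P G
      (continuous_testFn τ l k).stronglyMeasurable (fun p => (norm_testFn τ l k p).le),
    sub_eq_zero]
  exact Fintype.sum_bijective σ hσ_inj.bijective_of_finite _ _
    fun i => testFn_congr_posAt l (hσ i).symm

/-- The signed measure `h = ∑ δ_{(x_i,v_i)} − ∑ δ_{(g_j,w_j)}` associated
with a configuration and matched ghost points lies in the kernel of the measurement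
operator `𝒢`. -/
theorem ghost_difference_in_kernel
    {d K : ℕ} (hd : 1 ≤ d) (hK : 1 ≤ K) (τ : ℝ) (hτ : 0 < τ) (f_c : ℕ)
    (P G : Fin (2 * K + 1) → PS d)
    (hPmem : ∀ i, P i ∈ Omega d K τ) (hPdist : Function.Injective P)
    (hGmem : ∀ j, G j ∈ Omega d K τ) (hGdist : Function.Injective G)
    (hpos : ∀ k ∈ Finset.Icc (-(K : ℤ)) (K : ℤ), ∀ i i' : Fin (2 * K + 1), i ≠ i' →
      (fun j => (P i).1 j + (k : ℝ) * τ * (P i).2 j) ≠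
        (fun j => (P i').1 j + (k : ℝ) * τ * (P i').2 j))
    (huniq : ∀ k ∈ Finset.Icc (-(K : ℤ)) (K : ℤ), ∀ i : Fin (2 * K + 1),
      ∃! j' : Fin (2 * K + 1), ∀ j,
        (G j').1 j - (P i).1 j + (k : ℝ) * τ * ((G j').2 j - (P i).2 j) = 0) :
    ∀ l : Fin d → ℤ, (∀ j, |l j| ≤ (f_c : ℤ)) → ∀ k : ℤ, |k| ≤ (K : ℤ) →
      Gmeas τ ((∑ i, cdirac (P i)) - (∑ j, cdirac (G j))) l k = 0 :=
  ghost_difference_in_kernel_general τ f_c P G hpos huniq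

end
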